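/- Let t = 6/13. Let u be an additive nonnegative valuation on a finite item set X with u(X) > 1 − t/2, and suppose every singleton has u-value < t/2 and every three-element subset has value < t/2 (so all but the top two items have value < t/6). Let g_1, g_2 be the two most valuable items and X^1 a minimal superset of {g_1,g_2} with u(X^1) ≥ 2t/3; set X^2 = X∖X^1. Then u(X^1) < 5t/6 and min(t, u(X^1)) + min(t, u(X^2)) ≥ (2/3)t + t. -/

import Mathlib

/-!
Every item other than the top two `g1, g2` forms a triple with them, so three times its value is
below `t/2`, i.e. it is worth less than `t/6`. A minimal `X1` containing such an item loses less
than `t/6` when that item is removed and therefore has value `< 2t/3 + t/6`; otherwise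
`X1 ⊆ {g1, g2}`, whose value is below `t/2` because some third item exists. For the second claim,
`2t/3 ≤ u X1 < t` and `u X1 + u X2 = u X > 1 - t/2 = 5t/3` make each of the four sums whose minimum
is `min t (u X1) + min t (u X2)` at least `5t/3`.
-/

open Finset

lemma le_min_add_min {c t a b : ℝ} (htt : c ≤ t + t) (htb : c ≤ t + b) (hat : c ≤ a + t)
    (hab : c ≤ a + b) : c ≤ min t a + min t b := by
  rcases min_choice t a with ha | ha <;> rcases min_choice t b with hb | hb <;>
    simp only [ha, hb] <;> assumption

section Valuation

variable {ι : Type*} [DecidableEq ι] {u : ι → ℝ} {X : Finset ι} {c : ℝ}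

lemma add_add_lt_of_forall_card_eq_three
    (h3 : ∀ S ⊆ X, #S = 3 → ∑ j ∈ S, u j < c) {a b d : ι} (ha : a ∈ X) (hb : b ∈ X)
    (hd : d ∈ X) (hab : a ≠ b) (had : a ≠ d) (hbd : b ≠ d) : u a + u b + u d < c := by
  have hsub : ({a, b, d} : Finset ι) ⊆ X := by
    simp only [insert_subset_iff, singleton_subset_iff]
    exact ⟨ha, hb, hd⟩
  have hcard : #({a, b, d} : Finset ι) = 3 := card_eq_three.2 ⟨a, b, d, hab, had, hbd, rfl⟩
  have := h3 _ hsub hcard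
  rwa [sum_insert (by simp [hab, had]), sum_pair hbd, ← add_assoc] at this

lemma lt_div_three_of_ne_top_two
    (h3 : ∀ S ⊆ X, #S = 3 → ∑ j ∈ S, u j < c) {g1 g2 : ι} (hg1 : g1 ∈ X) (hg2 : g2 ∈ X)
    (hgne : g1 ≠ g2) (htop1 : ∀ g ∈ X, g ≠ g1 → u g ≤ u g1)
    (htop2 : ∀ g ∈ X, g ≠ g1 → g ≠ g2 → u g ≤ u g2)
    {g : ι} (hg : g ∈ X) (hgg1 : g ≠ g1) (hgg2 : g ≠ g2) : u g < c / 3 := by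
  have htriple := add_add_lt_of_forall_card_eq_three h3 hg1 hg2 hg hgne hgg1.symm hgg2.symm
  have h21 := htop1 g2 hg2 hgne.symm
  have hg2' := htop2 g hg hgg1 hgg2
  linarith

lemma sum_lt_add_of_forall_sum_erase_lt {S : Finset ι} {θ ε : ℝ}
    (hmin : ∀ g ∈ S, ∑ j ∈ S.erase g, u j < θ) {g : ι} (hg : g ∈ S) (hug : u g < ε) :
    ∑ j ∈ S, u j < θ + ε := by
  rw [← sum_erase_add _ _ hg]
  exact add_lt_add (hmin g hg) hug

end Valuation

theorem stmt_16_general {ι : Type*} [DecidableEq ι]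
    (u : ι → ℝ) (hu : ∀ j, 0 ≤ u j)
    (X : Finset ι) (hXval : 1 - (6 / 13 : ℝ) / 2 < ∑ j ∈ X, u j) (hXcard : 3 ≤ X.card)
    (h3 : ∀ S ⊆ X, S.card = 3 → ∑ j ∈ S, u j < (6 / 13 : ℝ) / 2)
    (g1 g2 : ι) (hg1 : g1 ∈ X) (hg2 : g2 ∈ X) (hgne : g1 ≠ g2)
    (htop1 : ∀ g ∈ X, g ≠ g1 → u g ≤ u g1)
    (htop2 : ∀ g ∈ X, g ≠ g1 → g ≠ g2 → u g ≤ u g2)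
    (X1 : Finset ι) (hX1sub : X1 ⊆ X)
    (hX1val : (2 / 3 : ℝ) * (6 / 13) ≤ ∑ j ∈ X1, u j)
    (hX1min : ∀ g ∈ X1, ∑ j ∈ X1.erase g, u j < (2 / 3 : ℝ) * (6 / 13)) :
    (∑ j ∈ X1, u j < (5 / 6 : ℝ) * (6 / 13)) ∧
    (2 / 3 : ℝ) * (6 / 13) + (6 / 13) ≤
      min (6 / 13 : ℝ) (∑ j ∈ X1, u j) + min (6 / 13 : ℝ) (∑ j ∈ X \ X1, u j) := by
  have hsmall (g) (hg : g ∈ X) (hgg1 : g ≠ g1) (hgg2 : g ≠ g2) : u g < (6 / 13 : ℝ) / 2 / 3 :=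
    lt_div_three_of_ne_top_two h3 hg1 hg2 hgne htop1 htop2 hg hgg1 hgg2
  have hsplit : ∑ j ∈ X \ X1, u j + ∑ j ∈ X1, u j = ∑ j ∈ X, u j := sum_sdiff hX1sub
  have hX1lt : ∑ j ∈ X1, u j < (5 / 6 : ℝ) * (6 / 13) := by
    by_cases hex : ∃ g ∈ X1, g ≠ g1 ∧ g ≠ g2
    · obtain ⟨g, hg, hgg1, hgg2⟩ := hex
      linarith [sum_lt_add_of_forall_sum_erase_lt hX1min hg (hsmall g (hX1sub hg) hgg1 hgg2)]
    · push Not at hex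
      have hX1pair : X1 ⊆ {g1, g2} := fun g hg =>
        mem_insert.2 ((eq_or_ne g g1).imp id fun hgg1 => mem_singleton.2 (hex g hg hgg1))
      obtain ⟨g3, hg3, hg3pair⟩ := exists_mem_notMem_of_card_lt_card
        (lt_of_le_of_lt card_le_two hXcard : #({g1, g2} : Finset ι) < #X)
      simp only [mem_insert, mem_singleton, not_or] at hg3pair
      have hpair := sum_le_sum_of_subset_of_nonneg hX1pair fun j _ _ => hu j
      rw [sum_pair hgne] at hpair
      linarith [hu g3, add_add_lt_of_forall_card_eq_three h3 hg1 hg2 hg3 hgne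
        (Ne.symm hg3pair.1) (Ne.symm hg3pair.2)]
  exact ⟨hX1lt, le_min_add_min (by norm_num) (by linarith) (by linarith) (by linarith)⟩

/-- With `t = 6/13`: let `u` be an additive nonnegative valuation on a
finite set `X` with at least 3 items and `u X > 1 − t/2`, where every singleton has
value `< t/2` and every 3-element subset has value `< t/2`. Let `g1, g2` be the two most
valuable items and `X1 ⊆ X` a minimal subset containing `{g1, g2}` with `u X1 ≥ 2t/3`;
set `X2 = X \ X1`. Then `u X1 < 5t/6` and
`min t (u X1) + min t (u X2) ≥ (2/3) t + t`. -/
theorem stmt_16 {ι : Type*} [DecidableEq ι]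
    (u : ι → ℝ) (hu : ∀ j, 0 ≤ u j)
    (X : Finset ι) (hXval : 1 - (6 / 13 : ℝ) / 2 < ∑ j ∈ X, u j) (hXcard : 3 ≤ X.card)
    (hsingle : ∀ g ∈ X, u g < (6 / 13 : ℝ) / 2)
    (h3 : ∀ S ⊆ X, S.card = 3 → ∑ j ∈ S, u j < (6 / 13 : ℝ) / 2)
    (g1 g2 : ι) (hg1 : g1 ∈ X) (hg2 : g2 ∈ X) (hgne : g1 ≠ g2)
    (htop1 : ∀ g ∈ X, g ≠ g1 → u g ≤ u g1)
    (htop2 : ∀ g ∈ X, g ≠ g1 → g ≠ g2 → u g ≤ u g2)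
    (X1 : Finset ι) (hX1sub : X1 ⊆ X) (hg1X1 : g1 ∈ X1) (hg2X1 : g2 ∈ X1)
    (hX1val : (2 / 3 : ℝ) * (6 / 13) ≤ ∑ j ∈ X1, u j)
    (hX1min : ∀ g ∈ X1, ∑ j ∈ X1.erase g, u j < (2 / 3 : ℝ) * (6 / 13)) :
    (∑ j ∈ X1, u j < (5 / 6 : ℝ) * (6 / 13)) ∧
    (2 / 3 : ℝ) * (6 / 13) + (6 / 13) ≤
      min (6 / 13 : ℝ) (∑ j ∈ X1, u j) + min (6 / 13 : ℝ) (∑ j ∈ X \ X1, u j) :=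
  stmt_16_general u hu X hXval hXcard h3 g1 g2 hg1 hg2 hgne htop1 htop2 X1 hX1sub hX1val hX1min
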